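/- arXiv:2303.05755 — 2 statements merged into one kernel-verified Lean document; each statement's English description precedes it below -/
import Mathlib

section
/- Suppose G_{α₀} is μ-strongly convex for some α₀ > 0 and μ > 0, each f_k is L-smooth, and C₁ > 0 satisfies ‖∇F(𝐱_*^β + s(𝐱_*^α − 𝐱_*^β))‖ ≤ C₁ for all s ∈ [0,1], α, β ∈ (0, α₀]. Let {α(t)} be positive stepsizes with α(t) ≤ min{(1+λ_m(W))/L, α₀} for all t, and let 𝐱(t+1) = 𝐱(t) − ∇G_{α(t)}(𝐱(t)). Then for every t, ‖𝐱(t+1) − 𝐱_*^{α(t+1)}‖ ≤ ‖𝐱(t) − 𝐱_*^{α(t)}‖ + (2α₀C₁/(μ α(t))) |α(t+1) − α(t)|. -/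
open Finset Set
open scoped RealInnerProductSpace

noncomputable section

/-- The quadratic penalty `(1/2) 𝐱ᵀ (I − W ⊗ I_n) 𝐱` on the stacked space `ℝ^{nm}`,
where `𝐱 = (x_1, …, x_m)` is indexed by pairs `(k, i)`. -/
def stackedQuad (m n : ℕ) (W : Matrix (Fin m) (Fin m) ℝ)
    (x : EuclideanSpace ℝ (Fin m × Fin n)) : ℝ :=
  (1 / 2) * (‖x‖ ^ 2 - ∑ k : Fin m, ∑ j : Fin m, W k j * ∑ i : Fin n, x (k, i) * x (j, i))

/-- `F(𝐱) = (1/m) ∑ₖ f_k(x_k)` on the stacked space `ℝ^{nm}`. -/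
def stackedF (m n : ℕ) (f : Fin m → EuclideanSpace ℝ (Fin n) → ℝ)
    (x : EuclideanSpace ℝ (Fin m × Fin n)) : ℝ :=
  (1 / (m : ℝ)) * ∑ k : Fin m, f k (WithLp.toLp 2 (fun i => x (k, i)))

/-- `G_α(𝐱) = α F(𝐱) + (1/2) 𝐱ᵀ (I − W ⊗ I_n) 𝐱`. -/
def DGDG (m n : ℕ) (W : Matrix (Fin m) (Fin m) ℝ)
    (f : Fin m → EuclideanSpace ℝ (Fin n) → ℝ) (α : ℝ)
    (x : EuclideanSpace ℝ (Fin m × Fin n)) : ℝ :=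
  α * stackedF m n f x + stackedQuad m n W x

/-- `g` is `μ`-strongly convex: `g − (μ/2)‖·‖²` is convex. -/
def StrongConvexWith {E : Type*} [NormedAddCommGroup E] [InnerProductSpace ℝ E]
    (μ : ℝ) (g : E → ℝ) : Prop :=
  ConvexOn ℝ Set.univ (fun x => g x - μ / 2 * ‖x‖ ^ 2)

/-!
Write `D_h(x, y) = h y - h x - ⟪∇h x, y - x⟫` for the Bregman divergence and `Q` for the
penalty `(1/2) 𝐱ᵀ(I − W ⊗ I_n)𝐱`, so that `D_Q(x, y) = Q (y - x)` and `0 ≤ Q v ≤ (1 - λ)/2 ‖v‖²`.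
For `0 < a ≤ α₀`, `G_a = (a/α₀) G_{α₀} + (1 - a/α₀) Q`, hence `D_{G_a} ≥ (μa/α₀)/2 ‖y - x‖²`;
and `D_{G_a} = a D_F + Q (y - x) ≤ (aL + 1 - λ)/2 ‖y - x‖² ≤ ‖y - x‖²` when `aL ≤ 1 + λ`.

The upper bound makes `∇G_a` co-coercive with constant `2`, so the unit gradient step is
nonexpansive around its fixed point `𝐱_*^a`. The lower bound makes `∇G_a` strongly monotone, and
`∇G_a(𝐱_*^b) = (a - b) ∇F(𝐱_*^b)`, so `‖𝐱_*^a - 𝐱_*^b‖ ≤ α₀ C₁ |b - a| / (μ a)`. The triangle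
inequality through `𝐱_*^{α(t)}` combines the two.
-/

section Bregman

variable {E : Type*} [NormedAddCommGroup E] [InnerProductSpace ℝ E]

def bregmanDiv (h : E → ℝ) (g : E → E) (x y : E) : ℝ := h y - h x - ⟪g x, y - x⟫

variable {h : E → ℝ} {g : E → E}

lemma bregmanDiv_add_bregmanDiv (x y : E) :
    bregmanDiv h g x y + bregmanDiv h g y x = ⟪g x - g y, x - y⟫ := by
  have hyx : y - x = -(x - y) := (neg_sub x y).symm
  simp only [bregmanDiv, hyx, inner_neg_right, inner_sub_left]
  ring

lemma mul_norm_sub_le_norm_sub_of_bregmanDiv {μ : ℝ}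
    (hlow : ∀ x y, μ / 2 * ‖y - x‖ ^ 2 ≤ bregmanDiv h g x y) (x y : E) :
    μ * ‖x - y‖ ≤ ‖g x - g y‖ := by
  rcases (norm_nonneg (x - y)).eq_or_lt with hxy | hxy
  · rw [← hxy, mul_zero]
    exact norm_nonneg _
  refine le_of_mul_le_mul_right ?_ hxy
  calc μ * ‖x - y‖ * ‖x - y‖ ≤ bregmanDiv h g x y + bregmanDiv h g y x := by
        have hxy := hlow x y
        have hyx := hlow y x
        rw [norm_sub_rev] at hxy
        nlinarith
    _ = ⟪g x - g y, x - y⟫ := bregmanDiv_add_bregmanDiv x y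
    _ ≤ ‖g x - g y‖ * ‖x - y‖ := real_inner_le_norm _ _

/-- Compare the tangent plane at `x` with the upper paraboloid at `y`, at the point
`y - L⁻¹ (g y - g x)` where that paraboloid is lowest. -/
lemma norm_sub_sq_div_le_bregmanDiv {L : ℝ} (hL : 0 < L)
    (hlow : ∀ x y, 0 ≤ bregmanDiv h g x y)
    (hup : ∀ x y, bregmanDiv h g x y ≤ L / 2 * ‖y - x‖ ^ 2) (x y : E) :
    ‖g y - g x‖ ^ 2 / (2 * L) ≤ bregmanDiv h g x y := by
  set d := g y - g x
  set z := y - L⁻¹ • d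
  have hup_z := hup y z
  have hlow_z := hlow x z
  have hzy : z - y = -(L⁻¹ • d) := by simp [z]
  have hzx : z - x = (y - x) - L⁻¹ • d := by simp only [z]; abel
  have hd : L⁻¹ * ⟪g y, d⟫ - L⁻¹ * ⟪g x, d⟫ = L⁻¹ * ‖d‖ ^ 2 := by
    rw [← mul_sub, ← inner_sub_left, real_inner_self_eq_norm_sq]
  have hL' : L / 2 * (L⁻¹ ^ 2 * ‖d‖ ^ 2) = L⁻¹ * ‖d‖ ^ 2 / 2 := by field_simp
  simp only [bregmanDiv, hzy, hzx, inner_neg_right, inner_sub_right, real_inner_smul_right,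
    norm_neg, norm_smul, Real.norm_eq_abs, abs_inv, abs_of_pos hL, mul_pow] at hup_z hlow_z ⊢
  rw [div_eq_mul_inv, mul_inv, ← mul_assoc]
  linarith

lemma norm_sub_sq_le_mul_inner_of_bregmanDiv {L : ℝ} (hL : 0 < L)
    (hlow : ∀ x y, 0 ≤ bregmanDiv h g x y)
    (hup : ∀ x y, bregmanDiv h g x y ≤ L / 2 * ‖y - x‖ ^ 2) (x y : E) :
    ‖g x - g y‖ ^ 2 ≤ L * ⟪g x - g y, x - y⟫ := by
  have hxy := norm_sub_sq_div_le_bregmanDiv hL hlow hup x y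
  have hyx := norm_sub_sq_div_le_bregmanDiv hL hlow hup y x
  rw [norm_sub_rev] at hxy
  have hhalf : ‖g x - g y‖ ^ 2 / L = 2 * (‖g x - g y‖ ^ 2 / (2 * L)) := by ring
  rw [← bregmanDiv_add_bregmanDiv (h := h), ← div_le_iff₀' hL]
  linarith

lemma norm_sub_sub_sub_le_of_bregmanDiv (hlow : ∀ x y, 0 ≤ bregmanDiv h g x y)
    (hup : ∀ x y, bregmanDiv h g x y ≤ ‖y - x‖ ^ 2) (x y : E) :
    ‖(x - g x) - (y - g y)‖ ≤ ‖x - y‖ := by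
  have hco := norm_sub_sq_le_mul_inner_of_bregmanDiv two_pos hlow
    (fun x y => (hup x y).trans_eq (by ring)) x y
  have hsplit : (x - g x) - (y - g y) = (x - y) - (g x - g y) := by abel
  rw [← sq_le_sq₀ (norm_nonneg _) (norm_nonneg _), hsplit, norm_sub_sq_real, real_inner_comm]
  linarith

variable [CompleteSpace E]

lemma HasGradientAt.hasDerivAt_add_smul {x v g' : E} {t : ℝ}
    (hg : HasGradientAt h g' (x + t • v)) :
    HasDerivAt (fun s : ℝ => h (x + s • v)) ⟪g', v⟫ t := by
  have hline : HasDerivAt (fun s : ℝ => x + s • v) v t := by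
    simpa using ((hasDerivAt_id t).smul_const v).const_add x
  simpa [Function.comp_def] using hg.hasFDerivAt.comp_hasDerivAt t hline

lemma IsLocalMin.gradient_eq_zero {x : E} (hx : IsLocalMin h x) : gradient h x = 0 := by
  simp [gradient, hx.fderiv_eq_zero]

lemma hasGradientAt_mul_norm_sq (μ : ℝ) (x : E) :
    HasGradientAt (fun y : E => μ / 2 * ‖y‖ ^ 2) (μ • x) x := by
  rw [hasGradientAt_iff_hasFDerivAt]
  refine ((hasStrictFDerivAt_norm_sq x).hasFDerivAt.const_mul (μ / 2)).congr_fderiv ?_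
  ext v
  simp
  ring

lemma ConvexOn.bregmanDiv_nonneg (hconv : ConvexOn ℝ univ h) {x : E}
    (hx : HasGradientAt h (g x) x) (y : E) : 0 ≤ bregmanDiv h g x y := by
  have hline : (fun s : ℝ => h (x + s • (y - x))) = h ∘ AffineMap.lineMap x y := by
    ext s
    simp [AffineMap.lineMap_apply_module', add_comm]
  have hconv_line : ConvexOn ℝ univ (fun s : ℝ => h (x + s • (y - x))) := by
    rw [hline]
    exact hconv.comp_affineMap _
  have hslope := hconv_line.le_slope_of_hasDerivAt (mem_univ 0) (mem_univ 1) one_pos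
    (HasGradientAt.hasDerivAt_add_smul (by simpa using hx))
  simp only [slope_def_field, zero_smul, add_zero, one_smul, add_sub_cancel, sub_zero,
    div_one] at hslope
  rw [bregmanDiv]
  linarith

lemma StrongConvexWith.mul_norm_sq_le_bregmanDiv {μ : ℝ} (hsc : StrongConvexWith μ h) {x : E}
    (hx : HasGradientAt h (g x) x) (y : E) :
    μ / 2 * ‖y - x‖ ^ 2 ≤ bregmanDiv h g x y := by
  have hx' : HasGradientAt (fun z => h z - μ / 2 * ‖z‖ ^ 2) (g x - μ • x) x := by
    rw [hasGradientAt_iff_hasFDerivAt, map_sub]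
    exact hx.hasFDerivAt.sub (hasGradientAt_mul_norm_sq μ x).hasFDerivAt
  have hnonneg := ConvexOn.bregmanDiv_nonneg (g := fun z => g z - μ • z) hsc hx' y
  rw [bregmanDiv, norm_sub_sq_real]
  simp only [bregmanDiv, inner_sub_left, inner_sub_right, real_inner_smul_left,
    real_inner_self_eq_norm_sq, real_inner_comm x y] at hnonneg ⊢
  linarith

lemma bregmanDiv_le_of_lipschitz {K : ℝ} (hg : ∀ z, HasGradientAt h (g z) z)
    (hlip : ∀ z w, ‖g z - g w‖ ≤ K * ‖z - w‖) (x y : E) :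
    bregmanDiv h g x y ≤ K / 2 * ‖y - x‖ ^ 2 := by
  set v := y - x
  set ψ : ℝ → ℝ := fun t => h (x + t • v) - t * ⟪g x, v⟫ - K / 2 * ‖v‖ ^ 2 * t ^ 2
  have hψ : ∀ t, HasDerivAt ψ (⟪g (x + t • v) - g x, v⟫ - K * ‖v‖ ^ 2 * t) t := by
    intro t
    refine ((((hg _).hasDerivAt_add_smul).sub ((hasDerivAt_id t).mul_const ⟪g x, v⟫)).sub
      ((hasDerivAt_pow 2 t).const_mul (K / 2 * ‖v‖ ^ 2))).congr_deriv ?_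
    rw [inner_sub_left]
    push_cast
    ring
  have hanti : AntitoneOn ψ (Icc 0 1) := by
    have hψ_diff : Differentiable ℝ ψ := fun t => (hψ t).differentiableAt
    refine antitoneOn_of_deriv_nonpos (convex_Icc 0 1) hψ_diff.continuous.continuousOn
      hψ_diff.differentiableOn fun t ht => ?_
    rw [interior_Icc] at ht
    have hlip_t : ‖g (x + t • v) - g x‖ ≤ K * (t * ‖v‖) := by
      simpa [norm_smul, abs_of_pos ht.1] using hlip (x + t • v) x
    rw [(hψ t).deriv]
    nlinarith [real_inner_le_norm (g (x + t • v) - g x) v, norm_nonneg v]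
  have h01 := hanti (left_mem_Icc.2 zero_le_one) (right_mem_Icc.2 zero_le_one) zero_le_one
  simp only [ψ, v, zero_smul, add_zero, one_smul, add_sub_cancel, zero_mul, sub_zero,
    one_mul, one_pow, mul_one, ne_eq, OfNat.ofNat_ne_zero, not_false_eq_true, zero_pow] at h01
  rw [bregmanDiv]
  linarith

end Bregman

section Stacked

open Matrix
open scoped Kronecker

variable {m n : ℕ}

def block (k : Fin m) : EuclideanSpace ℝ (Fin m × Fin n) →L[ℝ] EuclideanSpace ℝ (Fin n) :=
  LinearMap.toContinuousLinearMap
    { toFun := fun x => WithLp.toLp 2 (fun i => x (k, i))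
      map_add' := fun _ _ => rfl
      map_smul' := fun _ _ => rfl }

def stack (u : Fin m → EuclideanSpace ℝ (Fin n)) : EuclideanSpace ℝ (Fin m × Fin n) :=
  WithLp.toLp 2 (fun p => u p.1 p.2)

@[simp]
lemma block_apply (k : Fin m) (x : EuclideanSpace ℝ (Fin m × Fin n)) (i : Fin n) :
    block k x i = x (k, i) :=
  rfl

@[simp]
lemma block_stack (u : Fin m → EuclideanSpace ℝ (Fin n)) (k : Fin m) : block k (stack u) = u k :=
  rfl

lemma inner_eq_sum_inner_block (x y : EuclideanSpace ℝ (Fin m × Fin n)) :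
    ⟪x, y⟫ = ∑ k, ⟪block k x, block k y⟫ := by
  simp [PiLp.inner_apply, Fintype.sum_prod_type]

lemma norm_sq_eq_sum_norm_sq_block (x : EuclideanSpace ℝ (Fin m × Fin n)) :
    ‖x‖ ^ 2 = ∑ k, ‖block k x‖ ^ 2 := by
  simp only [← real_inner_self_eq_norm_sq, inner_eq_sum_inner_block x x]

lemma inner_block_block (k j : Fin m) (x y : EuclideanSpace ℝ (Fin m × Fin n)) :
    ⟪block k x, block j y⟫ = ∑ i, x (k, i) * y (j, i) := by
  simp [PiLp.inner_apply, mul_comm]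

def mixOp (W : Matrix (Fin m) (Fin m) ℝ) :
    EuclideanSpace ℝ (Fin m × Fin n) →L[ℝ] EuclideanSpace ℝ (Fin m × Fin n) :=
  toEuclideanCLM (𝕜 := ℝ) (W ⊗ₖ (1 : Matrix (Fin n) (Fin n) ℝ))

variable {W : Matrix (Fin m) (Fin m) ℝ}

lemma block_mixOp (x : EuclideanSpace ℝ (Fin m × Fin n)) (k : Fin m) :
    block k (mixOp W x) = ∑ j, W k j • block j x := by
  ext i
  simp [mixOp, mulVec, dotProduct, Fintype.sum_prod_type, one_apply]

lemma inner_mixOp (x y : EuclideanSpace ℝ (Fin m × Fin n)) :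
    ⟪x, mixOp W y⟫ = ∑ k, ∑ j, W k j * ⟪block k x, block j y⟫ := by
  simp [inner_eq_sum_inner_block x, block_mixOp, inner_sum, real_inner_smul_right]

lemma inner_mixOp_comm (hW : W.IsSymm) (x y : EuclideanSpace ℝ (Fin m × Fin n)) :
    ⟪x, mixOp W y⟫ = ⟪y, mixOp W x⟫ := by
  rw [inner_mixOp, inner_mixOp, Finset.sum_comm]
  refine Finset.sum_congr rfl fun k _ => Finset.sum_congr rfl fun j _ => ?_
  rw [hW.apply k j, real_inner_comm]

lemma stackedQuad_eq (x : EuclideanSpace ℝ (Fin m × Fin n)) :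
    stackedQuad m n W x = 1 / 2 * (‖x‖ ^ 2 - ⟪x, mixOp W x⟫) := by
  simp [stackedQuad, inner_mixOp, inner_block_block]

/-- Since `W` is doubly stochastic, `‖W ⊗ I_n‖ ≤ 1`; here this is seen blockwise from
`⟪x_k, x_j⟫ ≤ (‖x_k‖² + ‖x_j‖²) / 2`. -/
lemma inner_mixOp_self_le (hW : W.IsSymm) (hW_nonneg : ∀ i j, 0 ≤ W i j)
    (hW_row : ∀ i, ∑ j, W i j = 1) (x : EuclideanSpace ℝ (Fin m × Fin n)) :
    ⟪x, mixOp W x⟫ ≤ ‖x‖ ^ 2 := by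
  set a : Fin m → ℝ := fun k => ‖block k x‖ ^ 2
  have hcol : ∀ j, ∑ k, W k j = 1 := fun j => by simpa [hW.apply] using hW_row j
  have hpair : ∀ k j, W k j * ⟪block k x, block j x⟫ ≤ W k j * a k / 2 + W k j * a j / 2 := by
    intro k j
    have := norm_sub_sq_real (block k x) (block j x)
    nlinarith [hW_nonneg k j, sq_nonneg ‖block k x - block j x‖]
  have hrow_sum : ∑ k, ∑ j, W k j * a k / 2 = ∑ k, a k / 2 :=
    Finset.sum_congr rfl fun k _ => by rw [← Finset.sum_div, ← Finset.sum_mul, hW_row, one_mul]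
  have hcol_sum : ∑ k, ∑ j, W k j * a j / 2 = ∑ j, a j / 2 := by
    rw [Finset.sum_comm]
    exact Finset.sum_congr rfl fun j _ => by rw [← Finset.sum_div, ← Finset.sum_mul, hcol, one_mul]
  calc ⟪x, mixOp W x⟫ ≤ ∑ k, ∑ j, (W k j * a k / 2 + W k j * a j / 2) := by
        rw [inner_mixOp]
        exact Finset.sum_le_sum fun k _ => Finset.sum_le_sum fun j _ => hpair k j
    _ = ∑ k, a k / 2 + ∑ j, a j / 2 := by
        simp only [Finset.sum_add_distrib, hrow_sum, hcol_sum]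
    _ = ‖x‖ ^ 2 := by
        rw [norm_sq_eq_sum_norm_sq_block, ← Finset.sum_add_distrib]
        exact Finset.sum_congr rfl fun k _ => by ring

end Stacked

section Gradients

variable {m n : ℕ} {W : Matrix (Fin m) (Fin m) ℝ} {f : Fin m → EuclideanSpace ℝ (Fin n) → ℝ}

lemma hasGradientAt_stackedQuad (hW : W.IsSymm) (x : EuclideanSpace ℝ (Fin m × Fin n)) :
    HasGradientAt (stackedQuad m n W) (x - mixOp W x) x := by
  rw [show stackedQuad m n W = fun y => 1 / 2 * (‖y‖ ^ 2 - ⟪y, mixOp W y⟫) from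
    funext stackedQuad_eq, hasGradientAt_iff_hasFDerivAt]
  refine (((hasStrictFDerivAt_norm_sq x).hasFDerivAt.sub ((hasFDerivAt_id x).inner ℝ
    (mixOp W).hasFDerivAt)).const_mul (1 / 2)).congr_fderiv ?_
  ext v
  simp [fderivInnerCLM_apply, inner_mixOp_comm hW x v, real_inner_comm (mixOp W x) v]
  ring

lemma bregmanDiv_stackedQuad (hW : W.IsSymm) (x y : EuclideanSpace ℝ (Fin m × Fin n)) :
    bregmanDiv (stackedQuad m n W) (fun z => z - mixOp W z) x y = stackedQuad m n W (y - x) := by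
  simp only [bregmanDiv, stackedQuad_eq, map_sub, inner_sub_left, inner_sub_right,
    norm_sub_sq_real, real_inner_self_eq_norm_sq, inner_mixOp_comm hW x y,
    real_inner_comm (mixOp W x) y, real_inner_comm x y, real_inner_comm x (mixOp W x)]
  ring

lemma stackedQuad_nonneg (hW : W.IsSymm) (hW_nonneg : ∀ i j, 0 ≤ W i j)
    (hW_row : ∀ i, ∑ j, W i j = 1) (x : EuclideanSpace ℝ (Fin m × Fin n)) :
    0 ≤ stackedQuad m n W x := by
  rw [stackedQuad_eq]
  linarith [inner_mixOp_self_le hW hW_nonneg hW_row x]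

lemma stackedQuad_le {lam : ℝ}
    (hlam : ∀ u : EuclideanSpace ℝ (Fin m × Fin n),
      lam * ‖u‖ ^ 2 ≤ ∑ k : Fin m, ∑ j : Fin m, W k j * ∑ i : Fin n, u (k, i) * u (j, i))
    (x : EuclideanSpace ℝ (Fin m × Fin n)) :
    stackedQuad m n W x ≤ (1 - lam) / 2 * ‖x‖ ^ 2 := by
  rw [stackedQuad]
  linarith [hlam x]

lemma hasGradientAt_stackedF (hdiff : ∀ k, Differentiable ℝ (f k))
    (x : EuclideanSpace ℝ (Fin m × Fin n)) :
    HasGradientAt (stackedF m n f)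
      ((1 / (m : ℝ)) • stack fun k => gradient (f k) (block k x)) x := by
  have hsum := HasFDerivAt.fun_sum (u := Finset.univ) fun k _ =>
    (hdiff k (block k x)).hasGradientAt.hasFDerivAt.comp x (block k).hasFDerivAt
  rw [hasGradientAt_iff_hasFDerivAt]
  refine (hsum.const_mul (1 / (m : ℝ))).congr_fderiv ?_
  ext v
  simp [inner_eq_sum_inner_block _ v]

lemma norm_gradient_stackedF_sub_le (hdiff : ∀ k, Differentiable ℝ (f k)) {L : ℝ} (hL : 0 ≤ L)
    (hsmooth : ∀ k, ∀ x y, ‖gradient (f k) x - gradient (f k) y‖ ≤ L * ‖x - y‖)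
    (x y : EuclideanSpace ℝ (Fin m × Fin n)) :
    ‖gradient (stackedF m n f) x - gradient (stackedF m n f) y‖ ≤ L * ‖x - y‖ := by
  set d := (stack fun k => gradient (f k) (block k x)) - stack fun k => gradient (f k) (block k y)
  have hd : ‖d‖ ^ 2 ≤ (L * ‖x - y‖) ^ 2 := by
    rw [norm_sq_eq_sum_norm_sq_block, mul_pow, norm_sq_eq_sum_norm_sq_block, Finset.mul_sum]
    refine Finset.sum_le_sum fun k _ => ?_
    rw [map_sub, block_stack, block_stack, map_sub, ← mul_pow]
    exact pow_le_pow_left₀ (norm_nonneg _) (hsmooth k _ _) 2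
  rw [(hasGradientAt_stackedF hdiff x).gradient, (hasGradientAt_stackedF hdiff y).gradient,
    ← smul_sub, norm_smul, one_div, norm_inv, Real.norm_natCast]
  calc (m : ℝ)⁻¹ * ‖d‖ ≤ ‖d‖ := mul_le_of_le_one_left (norm_nonneg _) (Nat.cast_inv_le_one m)
    _ ≤ L * ‖x - y‖ := (sq_le_sq₀ (norm_nonneg _) (by positivity)).1 hd

lemma hasGradientAt_DGDG (hW : W.IsSymm) (hdiff : ∀ k, Differentiable ℝ (f k)) (a : ℝ)
    (x : EuclideanSpace ℝ (Fin m × Fin n)) :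
    HasGradientAt (DGDG m n W f a) (a • gradient (stackedF m n f) x + (x - mixOp W x)) x := by
  have hF := (hasGradientAt_stackedF hdiff x).differentiableAt.hasGradientAt
  rw [hasGradientAt_iff_hasFDerivAt, map_add, map_smul]
  exact (hF.hasFDerivAt.const_mul a).add (hasGradientAt_stackedQuad hW x).hasFDerivAt

lemma gradient_DGDG (hW : W.IsSymm) (hdiff : ∀ k, Differentiable ℝ (f k)) (a : ℝ)
    (x : EuclideanSpace ℝ (Fin m × Fin n)) :
    gradient (DGDG m n W f a) x = a • gradient (stackedF m n f) x + (x - mixOp W x) :=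
  (hasGradientAt_DGDG hW hdiff a x).gradient

lemma bregmanDiv_DGDG (hW : W.IsSymm) (hdiff : ∀ k, Differentiable ℝ (f k)) (a : ℝ)
    (x y : EuclideanSpace ℝ (Fin m × Fin n)) :
    bregmanDiv (DGDG m n W f a) (gradient (DGDG m n W f a)) x y
      = a * bregmanDiv (stackedF m n f) (gradient (stackedF m n f)) x y
        + stackedQuad m n W (y - x) := by
  rw [← bregmanDiv_stackedQuad hW]
  simp only [bregmanDiv, DGDG, gradient_DGDG hW hdiff, inner_add_left, real_inner_smul_left]
  ring

end Gradients

section Bounds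

variable {m n : ℕ} {W : Matrix (Fin m) (Fin m) ℝ} {f : Fin m → EuclideanSpace ℝ (Fin n) → ℝ}

lemma mul_norm_sq_le_bregmanDiv_DGDG (hW : W.IsSymm) (hW_nonneg : ∀ i j, 0 ≤ W i j)
    (hW_row : ∀ i, ∑ j, W i j = 1) (hdiff : ∀ k, Differentiable ℝ (f k)) {μ α₀ a : ℝ}
    (hα₀ : 0 < α₀) (hsc : StrongConvexWith μ (DGDG m n W f α₀)) (ha : 0 ≤ a) (haα₀ : a ≤ α₀)
    (x y : EuclideanSpace ℝ (Fin m × Fin n)) :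
    μ * a / α₀ / 2 * ‖y - x‖ ^ 2 ≤ bregmanDiv (DGDG m n W f a) (gradient (DGDG m n W f a)) x y := by
  have hsc_xy := hsc.mul_norm_sq_le_bregmanDiv
    (hasGradientAt_DGDG hW hdiff α₀ x).differentiableAt.hasGradientAt y
  have hQ := stackedQuad_nonneg hW hW_nonneg hW_row (y - x)
  have hc : 0 ≤ a / α₀ := div_nonneg ha hα₀.le
  have hc' : 0 ≤ 1 - a / α₀ := by rw [sub_nonneg, div_le_one hα₀]; exact haα₀
  rw [bregmanDiv_DGDG hW hdiff] at hsc_xy ⊢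
  set BF := bregmanDiv (stackedF m n f) (gradient (stackedF m n f)) x y
  set Q := stackedQuad m n W (y - x)
  have hsplit : a * BF + Q = a / α₀ * (α₀ * BF + Q) + (1 - a / α₀) * Q := by
    field_simp
    ring
  have hcoef : μ * a / α₀ / 2 * ‖y - x‖ ^ 2 = a / α₀ * (μ / 2 * ‖y - x‖ ^ 2) := by ring
  rw [hsplit, hcoef]
  nlinarith [mul_le_mul_of_nonneg_left hsc_xy hc, mul_nonneg hc' hQ]

lemma bregmanDiv_DGDG_le (hW : W.IsSymm) (hdiff : ∀ k, Differentiable ℝ (f k)) {L : ℝ}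
    (hL : 0 ≤ L) (hsmooth : ∀ k, ∀ x y, ‖gradient (f k) x - gradient (f k) y‖ ≤ L * ‖x - y‖)
    {lam : ℝ}
    (hlam : ∀ u : EuclideanSpace ℝ (Fin m × Fin n),
      lam * ‖u‖ ^ 2 ≤ ∑ k : Fin m, ∑ j : Fin m, W k j * ∑ i : Fin n, u (k, i) * u (j, i))
    {a : ℝ} (ha : 0 ≤ a) (haL : a * L ≤ 1 + lam) (x y : EuclideanSpace ℝ (Fin m × Fin n)) :
    bregmanDiv (DGDG m n W f a) (gradient (DGDG m n W f a)) x y ≤ ‖y - x‖ ^ 2 := by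
  have hF := bregmanDiv_le_of_lipschitz
    (fun z => (hasGradientAt_stackedF hdiff z).differentiableAt.hasGradientAt)
    (norm_gradient_stackedF_sub_le hdiff hL hsmooth) x y
  have hQ := stackedQuad_le hlam (y - x)
  rw [bregmanDiv_DGDG hW hdiff]
  nlinarith [mul_le_mul_of_nonneg_left hF ha, sq_nonneg ‖y - x‖]

lemma norm_sub_sub_gradient_DGDG_le (hW : W.IsSymm) (hW_nonneg : ∀ i j, 0 ≤ W i j)
    (hW_row : ∀ i, ∑ j, W i j = 1) (hdiff : ∀ k, Differentiable ℝ (f k)) {μ α₀ L lam a : ℝ}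
    (hμ : 0 ≤ μ) (hα₀ : 0 < α₀) (hsc : StrongConvexWith μ (DGDG m n W f α₀)) (hL : 0 ≤ L)
    (hsmooth : ∀ k, ∀ x y, ‖gradient (f k) x - gradient (f k) y‖ ≤ L * ‖x - y‖)
    (hlam : ∀ u : EuclideanSpace ℝ (Fin m × Fin n),
      lam * ‖u‖ ^ 2 ≤ ∑ k : Fin m, ∑ j : Fin m, W k j * ∑ i : Fin n, u (k, i) * u (j, i))
    (ha : 0 ≤ a) (haα₀ : a ≤ α₀) (haL : a * L ≤ 1 + lam) {xs : EuclideanSpace ℝ (Fin m × Fin n)}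
    (hxs : gradient (DGDG m n W f a) xs = 0) (z : EuclideanSpace ℝ (Fin m × Fin n)) :
    ‖z - gradient (DGDG m n W f a) z - xs‖ ≤ ‖z - xs‖ := by
  have hlow : ∀ p q, 0 ≤ bregmanDiv (DGDG m n W f a) (gradient (DGDG m n W f a)) p q :=
    fun p q => le_trans (by positivity)
      (mul_norm_sq_le_bregmanDiv_DGDG hW hW_nonneg hW_row hdiff hα₀ hsc ha haα₀ p q)
  simpa [hxs] using norm_sub_sub_sub_le_of_bregmanDiv hlow
    (bregmanDiv_DGDG_le hW hdiff hL hsmooth hlam ha haL) z xs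

lemma norm_sub_le_of_gradient_DGDG_eq_zero (hW : W.IsSymm) (hW_nonneg : ∀ i j, 0 ≤ W i j)
    (hW_row : ∀ i, ∑ j, W i j = 1) (hdiff : ∀ k, Differentiable ℝ (f k)) {μ α₀ a b C : ℝ}
    (hμ : 0 < μ) (hα₀ : 0 < α₀) (hsc : StrongConvexWith μ (DGDG m n W f α₀)) (ha : 0 < a)
    (haα₀ : a ≤ α₀) {xa xb : EuclideanSpace ℝ (Fin m × Fin n)}
    (hxa : gradient (DGDG m n W f a) xa = 0) (hxb : gradient (DGDG m n W f b) xb = 0)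
    (hC : ‖gradient (stackedF m n f) xb‖ ≤ C) :
    ‖xa - xb‖ ≤ α₀ * C / (μ * a) * |b - a| := by
  have hxb' : gradient (DGDG m n W f a) xb = (a - b) • gradient (stackedF m n f) xb := by
    rw [← sub_zero (gradient (DGDG m n W f a) xb), ← hxb, gradient_DGDG hW hdiff,
      gradient_DGDG hW hdiff]
    module
  have hmono := mul_norm_sub_le_norm_sub_of_bregmanDiv
    (mul_norm_sq_le_bregmanDiv_DGDG hW hW_nonneg hW_row hdiff hα₀ hsc ha.le haα₀) xa xb
  rw [hxa, hxb', zero_sub, norm_neg, norm_smul, Real.norm_eq_abs, abs_sub_comm] at hmono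
  have hscale : α₀ * (μ * a / α₀ * ‖xa - xb‖) = ‖xa - xb‖ * (μ * a) := by field_simp
  rw [div_mul_eq_mul_div, le_div_iff₀ (by positivity), ← hscale]
  nlinarith [mul_le_mul_of_nonneg_left hmono hα₀.le,
    mul_le_mul_of_nonneg_left hC (mul_nonneg hα₀.le (abs_nonneg (b - a)))]

end Bounds

theorem dgd_one_step_tracking_general {m n : ℕ}
    (W : Matrix (Fin m) (Fin m) ℝ)
    (hWsymm : W.IsSymm)
    (hWnonneg : ∀ i j, 0 ≤ W i j)
    (hWrow : ∀ i, ∑ j, W i j = 1)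
    (f : Fin m → EuclideanSpace ℝ (Fin n) → ℝ)
    (hdiff : ∀ k, Differentiable ℝ (f k))
    (L : ℝ) (hL : 0 < L)
    (hsmooth : ∀ k, ∀ x y, ‖gradient (f k) x - gradient (f k) y‖ ≤ L * ‖x - y‖)
    (lam : ℝ)
    (hlam : ∀ u : EuclideanSpace ℝ (Fin m × Fin n),
      lam * ‖u‖ ^ 2 ≤ ∑ k : Fin m, ∑ j : Fin m, W k j * ∑ i : Fin n, u (k, i) * u (j, i))
    (μ α₀ : ℝ) (hμ : 0 < μ) (hα₀ : 0 < α₀)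
    (hGsc : StrongConvexWith μ (DGDG m n W f α₀))
    (xstar : ℝ → EuclideanSpace ℝ (Fin m × Fin n))
    (hmin : ∀ a ∈ Set.Ioc (0 : ℝ) α₀, ∀ y, DGDG m n W f a (xstar a) ≤ DGDG m n W f a y)
    (C₁ : ℝ)
    (hC₁ : ∀ s ∈ Set.Icc (0 : ℝ) 1, ∀ a ∈ Set.Ioc (0 : ℝ) α₀, ∀ b ∈ Set.Ioc (0 : ℝ) α₀,
      ‖gradient (stackedF m n f) (xstar b + s • (xstar a - xstar b))‖ ≤ C₁)
    (α : ℕ → ℝ) (hαpos : ∀ t, 0 < α t)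
    (hαle : ∀ t, α t ≤ min ((1 + lam) / L) α₀)
    (x : ℕ → EuclideanSpace ℝ (Fin m × Fin n))
    (hiter : ∀ t, x (t + 1) = x t - gradient (DGDG m n W f (α t)) (x t)) :
    ∀ t, ‖x (t + 1) - xstar (α (t + 1))‖
      ≤ ‖x t - xstar (α t)‖ + (2 * α₀ * C₁ / (μ * α t)) * |α (t + 1) - α t| := by
  intro t
  have hα : ∀ s, 0 < α s ∧ α s ≤ α₀ := fun s => ⟨hαpos s, (hαle s).trans (min_le_right _ _)⟩
  have hcrit : ∀ s, gradient (DGDG m n W f (α s)) (xstar (α s)) = 0 := fun s =>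
    IsLocalMin.gradient_eq_zero (Filter.Eventually.of_forall (hmin _ (hα s)))
  have hstep : ‖x (t + 1) - xstar (α t)‖ ≤ ‖x t - xstar (α t)‖ := by
    rw [hiter t]
    exact norm_sub_sub_gradient_DGDG_le hWsymm hWnonneg hWrow hdiff hμ.le hα₀ hGsc hL.le hsmooth
      hlam (hα t).1.le (hα t).2 ((le_div_iff₀ hL).1 ((hαle t).trans (min_le_left _ _)))
      (hcrit t) (x t)
  have hC : ‖gradient (stackedF m n f) (xstar (α (t + 1)))‖ ≤ C₁ := by
    simpa using hC₁ 0 ⟨le_rfl, zero_le_one⟩ _ (hα (t + 1)) _ (hα (t + 1))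
  have hdist := norm_sub_le_of_gradient_DGDG_eq_zero hWsymm hWnonneg hWrow hdiff hμ hα₀ hGsc
    (hα t).1 (hα t).2 (hcrit t) (hcrit (t + 1)) hC
  have hslack : 0 ≤ α₀ * C₁ / (μ * α t) * |α (t + 1) - α t| := by
    have hαt := (hα t).1
    have hC₁_nonneg : 0 ≤ C₁ := (norm_nonneg _).trans hC
    positivity
  calc ‖x (t + 1) - xstar (α (t + 1))‖
      ≤ ‖x (t + 1) - xstar (α t)‖ + ‖xstar (α t) - xstar (α (t + 1))‖ :=
        norm_sub_le_norm_sub_add_norm_sub _ _ _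
    _ ≤ ‖x t - xstar (α t)‖ + (2 * α₀ * C₁ / (μ * α t)) * |α (t + 1) - α t| := by
        have htwice : 2 * α₀ * C₁ / (μ * α t) * |α (t + 1) - α t|
            = 2 * (α₀ * C₁ / (μ * α t) * |α (t + 1) - α t|) := by ring
        linarith

/-- **Lemma 3.1.** Under strong convexity of `G_{α₀}`, `L`-smoothness of the
local costs, and stepsizes `α(t) ≤ min{(1+λ_m(W))/L, α₀}`, the DGD iterates satisfy
`‖𝐱(t+1) − 𝐱_*^{α(t+1)}‖ ≤ ‖𝐱(t) − 𝐱_*^{α(t)}‖ + (2α₀C₁/(μα(t)))|α(t+1) − α(t)|`. -/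
theorem dgd_one_step_tracking {m n : ℕ} (hm : 1 ≤ m) (hn : 1 ≤ n)
    (W : Matrix (Fin m) (Fin m) ℝ)
    (hWsymm : W.IsSymm)
    (hWnonneg : ∀ i j, 0 ≤ W i j)
    (hWrow : ∀ i, ∑ j, W i j = 1)
    (hWdiag : ∀ i, 0 < W i i)
    (f : Fin m → EuclideanSpace ℝ (Fin n) → ℝ)
    (hdiff : ∀ k, Differentiable ℝ (f k))
    (L : ℝ) (hL : 0 < L)
    (hsmooth : ∀ k, ∀ x y, ‖gradient (f k) x - gradient (f k) y‖ ≤ L * ‖x - y‖)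
    (lam : ℝ) (hlam_gt : -1 < lam)
    (hlam : ∀ u : EuclideanSpace ℝ (Fin m × Fin n),
      lam * ‖u‖ ^ 2 ≤ ∑ k : Fin m, ∑ j : Fin m, W k j * ∑ i : Fin n, u (k, i) * u (j, i))
    (μ α₀ : ℝ) (hμ : 0 < μ) (hα₀ : 0 < α₀)
    (hGsc : StrongConvexWith μ (DGDG m n W f α₀))
    (xstar : ℝ → EuclideanSpace ℝ (Fin m × Fin n))
    (hmin : ∀ a ∈ Set.Ioc (0 : ℝ) α₀, ∀ y, DGDG m n W f a (xstar a) ≤ DGDG m n W f a y)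
    (C₁ : ℝ) (hC₁pos : 0 < C₁)
    (hC₁ : ∀ s ∈ Set.Icc (0 : ℝ) 1, ∀ a ∈ Set.Ioc (0 : ℝ) α₀, ∀ b ∈ Set.Ioc (0 : ℝ) α₀,
      ‖gradient (stackedF m n f) (xstar b + s • (xstar a - xstar b))‖ ≤ C₁)
    (α : ℕ → ℝ) (hαpos : ∀ t, 0 < α t)
    (hαle : ∀ t, α t ≤ min ((1 + lam) / L) α₀)
    (x : ℕ → EuclideanSpace ℝ (Fin m × Fin n))
    (hiter : ∀ t, x (t + 1) = x t - gradient (DGDG m n W f (α t)) (x t)) :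
    ∀ t, ‖x (t + 1) - xstar (α (t + 1))‖
      ≤ ‖x t - xstar (α t)‖ + (2 * α₀ * C₁ / (μ * α t)) * |α (t + 1) - α t| :=
  dgd_one_step_tracking_general W hWsymm hWnonneg hWrow f hdiff L hL hsmooth lam hlam μ α₀ hμ hα₀
    hGsc xstar hmin C₁ hC₁ α hαpos hαle x hiter
end
end

section
/- Assume G_{α₀} is μ-strongly convex for some α₀ > 0 and μ > 0. Then for all α, β ∈ (0, α₀], the minimizers 𝐱_*^α of G_α and 𝐱_*^β of G_β satisfy (β − α)(F(𝐱_*^α) − F(𝐱_*^β)) ≥ (μβ/(2α₀)) ‖𝐱_*^α − 𝐱_*^β‖². -/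
/-!
Expanding the squares shows `½ 𝐱ᵀ(I − W⊗Iₙ)𝐱 = ¼ ∑ₖ ∑ⱼ Wₖⱼ ‖xₖ − xⱼ‖²`, so the consensus penalty `Q`
is convex. Since `G_a = (a/α₀) G_{α₀} + (1 − a/α₀) Q`, every `G_a` with `0 ≤ a ≤ α₀` is
`(μa/α₀)`-strongly convex, and its minimizer obeys the quadratic growth bound
`G_a(𝐲) ≥ G_a(𝐱_*^a) + (μa/(2α₀)) ‖𝐲 − 𝐱_*^a‖²`. Adding this bound for `(a, 𝐲) = (α, 𝐱_*^β)` and for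
`(β, 𝐱_*^α)`, the `Q`-terms cancel and what remains is
`(β − α)(F(𝐱_*^α) − F(𝐱_*^β)) ≥ (μ(α + β)/(2α₀)) ‖𝐱_*^α − 𝐱_*^β‖²`.
-/

open Finset Set
open scoped RealInnerProductSpace

noncomputable section

section
variable {E : Type*} [NormedAddCommGroup E] [NormedSpace ℝ E]

open Filter Topology in
lemma StrongConvexOn.add_sq_le_of_isMinOn {s : Set E} {m : ℝ} {g : E → ℝ}
    (hg : StrongConvexOn s m g) {x y : E} (hx : x ∈ s) (hy : y ∈ s) (hmin : IsMinOn g s x) :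
    g x + m / 2 * ‖y - x‖ ^ 2 ≤ g y := by
  set K := m / 2 * ‖y - x‖ ^ 2
  have hchord : ∀ a ∈ Ioo (0 : ℝ) 1, g x + a * K ≤ g y := by
    rintro a ⟨ha₀, ha₁⟩
    have hab : a + (1 - a) = 1 := add_sub_cancel a 1
    have hconv : g (a • x + (1 - a) • y) ≤ a * g x + (1 - a) * g y - a * (1 - a) * K := by
      simpa only [norm_sub_rev x y, smul_eq_mul] using hg.2 hx hy ha₀.le (sub_nonneg.2 ha₁.le) hab
    have hle : g x ≤ g (a • x + (1 - a) • y) := hmin (hg.1 hx hy ha₀.le (sub_nonneg.2 ha₁.le) hab)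
    have : (1 - a) * (g x + a * K) ≤ (1 - a) * g y := by nlinarith
    exact le_of_mul_le_mul_left this (sub_pos.2 ha₁)
  have hlim : Tendsto (fun a : ℝ => g x + a * K) (𝓝[<] 1) (𝓝 (g x + K)) :=
    ((continuous_const.add (continuous_id.mul continuous_const)).tendsto' 1 _ (by simp [K])).mono_left
      nhdsWithin_le_nhds
  exact le_of_tendsto hlim (mem_of_superset (Ioo_mem_nhdsLT zero_lt_one) hchord)

end

section
variable {E : Type*} [NormedAddCommGroup E] [InnerProductSpace ℝ E]

lemma strongConvexWith_iff_strongConvexOn {μ : ℝ} {g : E → ℝ} :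
    StrongConvexWith μ g ↔ StrongConvexOn univ μ g :=
  strongConvexOn_iff_convex.symm

lemma StrongConvexWith.mul_add_of_le {F Q : E → ℝ} {μ α₀ a : ℝ} (hQ : ConvexOn ℝ univ Q)
    (hsc : StrongConvexWith μ fun x => α₀ * F x + Q x) (hα₀ : 0 < α₀) (ha : 0 ≤ a)
    (haα₀ : a ≤ α₀) : StrongConvexWith (μ * a / α₀) fun x => a * F x + Q x := by
  have hθ : 0 ≤ a / α₀ := div_nonneg ha hα₀.le
  have hθ' : 0 ≤ 1 - a / α₀ := sub_nonneg.2 ((div_le_one hα₀).2 haα₀)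
  have hcomb := (hsc.smul hθ).add (hQ.smul hθ')
  refine hcomb.congr fun x _ => ?_
  simp only [Pi.add_apply, smul_eq_mul]
  field_simp
  ring

theorem mul_sq_norm_sub_le_of_isMin_mul_add {F Q : E → ℝ} {μ α₀ α β : ℝ} {xα xβ : E}
    (hQ : ConvexOn ℝ univ Q) (hsc : StrongConvexWith μ fun x => α₀ * F x + Q x)
    (hμ : 0 ≤ μ) (hα₀ : 0 < α₀) (hα : α ∈ Icc 0 α₀) (hβ : β ∈ Icc 0 α₀)
    (hxα : ∀ y, α * F xα + Q xα ≤ α * F y + Q y) (hxβ : ∀ y, β * F xβ + Q xβ ≤ β * F y + Q y) :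
    μ * β / (2 * α₀) * ‖xα - xβ‖ ^ 2 ≤ (β - α) * (F xα - F xβ) := by
  have hgrowth : ∀ a ∈ Icc 0 α₀, ∀ {xa : E}, (∀ y, a * F xa + Q xa ≤ a * F y + Q y) →
      ∀ y, a * F xa + Q xa + μ * a / α₀ / 2 * ‖y - xa‖ ^ 2 ≤ a * F y + Q y :=
    fun a ha xa hxa y =>
      (strongConvexWith_iff_strongConvexOn.1 (hsc.mul_add_of_le hQ hα₀ ha.1 ha.2)).add_sq_le_of_isMinOn
        (mem_univ _) (mem_univ y) fun y _ => hxa y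
  have hgα := hgrowth α hα hxα xβ
  have hgβ := hgrowth β hβ hxβ xα
  rw [norm_sub_rev] at hgα
  have hcα : 0 ≤ μ * α / α₀ / 2 * ‖xα - xβ‖ ^ 2 := by have := hα.1; positivity
  rw [show μ * β / (2 * α₀) = μ * β / α₀ / 2 by ring]
  linarith

end

lemma ConvexOn.fun_sum {E ι : Type*} [AddCommGroup E] [Module ℝ E] {s : Set E} (hs : Convex ℝ s)
    {t : Finset ι} {f : ι → E → ℝ} (hf : ∀ i ∈ t, ConvexOn ℝ s (f i)) :
    ConvexOn ℝ s fun x => ∑ i ∈ t, f i x := by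
  classical
  induction t using Finset.induction_on with
  | empty => simpa using convexOn_const 0 hs
  | insert i t hi ih =>
    simp only [Finset.sum_insert hi]
    exact (hf i (mem_insert_self i t)).add (ih fun j hj => hf j (mem_insert_of_mem hj))

lemma sum_mul_norm_sub_sq {E ι : Type*} [NormedAddCommGroup E] [InnerProductSpace ℝ E]
    [Fintype ι] {W : Matrix ι ι ℝ} (hWsymm : W.IsSymm) (hWrow : ∀ i, ∑ j, W i j = 1)
    (v : ι → E) :
    ∑ k, ∑ j, W k j * ‖v k - v j‖ ^ 2 = 2 * (∑ k, ‖v k‖ ^ 2 - ∑ k, ∑ j, W k j * ⟪v k, v j⟫) := by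
  have hWcol : ∀ j, ∑ k, W k j = 1 := fun j => by
    simpa only [hWsymm.apply] using hWrow j
  simp only [norm_sub_sq_real, mul_add, mul_sub, sum_add_distrib, sum_sub_distrib]
  rw [sum_comm (f := fun k j => W k j * ‖v j‖ ^ 2)]
  simp only [← sum_mul, hWrow, hWcol, one_mul, mul_left_comm _ (2 : ℝ), ← mul_sum]
  ring

def stackBlock (m n : ℕ) (k : Fin m) :
    EuclideanSpace ℝ (Fin m × Fin n) →ₗ[ℝ] EuclideanSpace ℝ (Fin n) where
  toFun x := WithLp.toLp 2 fun i => x (k, i)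
  map_add' _ _ := rfl
  map_smul' _ _ := rfl

@[simp]
lemma stackBlock_apply {m n : ℕ} (k : Fin m) (x : EuclideanSpace ℝ (Fin m × Fin n)) (i : Fin n) :
    stackBlock m n k x i = x (k, i) :=
  rfl

lemma sum_norm_sq_stackBlock {m n : ℕ} (x : EuclideanSpace ℝ (Fin m × Fin n)) :
    ∑ k, ‖stackBlock m n k x‖ ^ 2 = ‖x‖ ^ 2 := by
  simp [EuclideanSpace.norm_sq_eq, Fintype.sum_prod_type]

lemma inner_stackBlock {m n : ℕ} (x : EuclideanSpace ℝ (Fin m × Fin n)) (k j : Fin m) :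
    ⟪stackBlock m n k x, stackBlock m n j x⟫ = ∑ i, x (k, i) * x (j, i) := by
  simp [PiLp.inner_apply, mul_comm]

lemma stackedQuad_eq_sum_mul_norm_sub_sq {m n : ℕ} {W : Matrix (Fin m) (Fin m) ℝ}
    (hWsymm : W.IsSymm) (hWrow : ∀ i, ∑ j, W i j = 1) (x : EuclideanSpace ℝ (Fin m × Fin n)) :
    stackedQuad m n W x =
      1 / 4 * ∑ k, ∑ j, W k j * ‖stackBlock m n k x - stackBlock m n j x‖ ^ 2 := by
  rw [sum_mul_norm_sub_sq hWsymm hWrow, sum_norm_sq_stackBlock, stackedQuad]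
  simp only [inner_stackBlock]
  ring

lemma convexOn_stackedQuad {m n : ℕ} {W : Matrix (Fin m) (Fin m) ℝ} (hWsymm : W.IsSymm)
    (hWnonneg : ∀ i j, 0 ≤ W i j) (hWrow : ∀ i, ∑ j, W i j = 1) :
    ConvexOn ℝ univ (stackedQuad m n W) := by
  have hsq : ConvexOn ℝ univ fun v : EuclideanSpace ℝ (Fin n) => ‖v‖ ^ 2 :=
    convexOn_univ_norm.pow (fun v _ => norm_nonneg v) 2
  have hsum : ConvexOn ℝ univ fun x : EuclideanSpace ℝ (Fin m × Fin n) =>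
      ∑ k, ∑ j, W k j * ‖stackBlock m n k x - stackBlock m n j x‖ ^ 2 :=
    .fun_sum convex_univ fun k _ => .fun_sum convex_univ fun j _ =>
      (hsq.comp_linearMap (stackBlock m n k - stackBlock m n j)).smul (hWnonneg k j)
  exact (hsum.smul (by norm_num : (0 : ℝ) ≤ 1 / 4)).congr fun x _ =>
    (stackedQuad_eq_sum_mul_norm_sub_sq hWsymm hWrow x).symm

theorem dgd_minimizers_monotonicity_general {m n : ℕ}
    (W : Matrix (Fin m) (Fin m) ℝ)
    (hWsymm : W.IsSymm)
    (hWnonneg : ∀ i j, 0 ≤ W i j)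
    (hWrow : ∀ i, ∑ j, W i j = 1)
    (f : Fin m → EuclideanSpace ℝ (Fin n) → ℝ)
    (μ α₀ : ℝ) (hμ : 0 < μ) (hα₀ : 0 < α₀)
    (hGsc : StrongConvexWith μ (DGDG m n W f α₀))
    (xstar : ℝ → EuclideanSpace ℝ (Fin m × Fin n))
    (hmin : ∀ a ∈ Set.Ioc (0 : ℝ) α₀, ∀ y, DGDG m n W f a (xstar a) ≤ DGDG m n W f a y) :
    ∀ α ∈ Set.Ioc (0 : ℝ) α₀, ∀ β ∈ Set.Ioc (0 : ℝ) α₀,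
      (μ * β / (2 * α₀)) * ‖xstar α - xstar β‖ ^ 2
        ≤ (β - α) * (stackedF m n f (xstar α) - stackedF m n f (xstar β)) := by
  intro α hα β hβ
  exact mul_sq_norm_sub_le_of_isMin_mul_add (convexOn_stackedQuad hWsymm hWnonneg hWrow) hGsc
    hμ.le hα₀ (Ioc_subset_Icc_self hα) (Ioc_subset_Icc_self hβ) (hmin α hα) (hmin β hβ)

/-- If `G_{α₀}` is `μ`-strongly convex, then for all `α, β ∈ (0, α₀]` the
minimizers satisfy `(β − α)(F(𝐱_*^α) − F(𝐱_*^β)) ≥ (μβ/(2α₀))‖𝐱_*^α − 𝐱_*^β‖²`. -/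
theorem dgd_minimizers_monotonicity {m n : ℕ} (hm : 1 ≤ m) (hn : 1 ≤ n)
    (W : Matrix (Fin m) (Fin m) ℝ)
    (hWsymm : W.IsSymm)
    (hWnonneg : ∀ i j, 0 ≤ W i j)
    (hWrow : ∀ i, ∑ j, W i j = 1)
    (hWdiag : ∀ i, 0 < W i i)
    (f : Fin m → EuclideanSpace ℝ (Fin n) → ℝ)
    (hdiff : ∀ k, Differentiable ℝ (f k))
    (μ α₀ : ℝ) (hμ : 0 < μ) (hα₀ : 0 < α₀)
    (hGsc : StrongConvexWith μ (DGDG m n W f α₀))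
    (xstar : ℝ → EuclideanSpace ℝ (Fin m × Fin n))
    (hmin : ∀ a ∈ Set.Ioc (0 : ℝ) α₀, ∀ y, DGDG m n W f a (xstar a) ≤ DGDG m n W f a y) :
    ∀ α ∈ Set.Ioc (0 : ℝ) α₀, ∀ β ∈ Set.Ioc (0 : ℝ) α₀,
      (μ * β / (2 * α₀)) * ‖xstar α - xstar β‖ ^ 2
        ≤ (β - α) * (stackedF m n f (xstar α) - stackedF m n f (xstar β)) :=
  dgd_minimizers_monotonicity_general W hWsymm hWnonneg hWrow f μ α₀ hμ hα₀ hGsc xstar hmin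
end
end
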